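/- For every n ≥ 0 and every integer k ≥ m, the normalized Lebesgue measure of the set of x ∈ Ω whose (n+1)-th digit equals k satisfies 1/(6k²) < λ_θ({x ∈ Ω : a_{n+1}(x) = k}) < (m+1)/k². -/

import Mathlib

/-!
The measure with density `1 / (x + 1/θ)` on `[0, θ]` is `T_θ`-invariant: the `T_θ`-preimage of an
interval `(s, t) ⊆ [0, θ]` is the disjoint union of the branch intervals
`(1/(iθ + t), 1/(iθ + s))`, `i ≥ m`, whose masses telescope to the mass of `(s, t)`.
Hence the set of `x` with `a_{n+1}(x) = k`, i.e. with `T_θ^n x` in `(1/((k+1)θ), 1/(kθ)]`, has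
invariant mass `log ((k+1)² / (k(k+2)))` for every `n`. On `[0, θ]` the density lies between
`θ/(1+θ²)` and `θ`, which turns this into `m · log(…) ≤ λ_θ(…) ≤ (m+1) · log(…)`, and
`1/(k+1)² < log ((k+1)²/(k(k+2))) < 1/(k(k+2))`.
-/

noncomputable section
open MeasureTheory Filter Set

namespace Theta

/-- θ = 1/√m -/
def th (m : ℕ) : ℝ := 1 / Real.sqrt m

/-- The θ-expansion map T_θ on [0,θ]. -/
def T (m : ℕ) (x : ℝ) : ℝ := if x = 0 then 0 else 1 / x - th m * ⌊1 / (x * th m)⌋₊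

/-- The n-th digit a_n(x) (n ≥ 1), a_n(x) = a_1(T_θ^{n-1} x) with a_1(x) = ⌊1/(xθ)⌋. -/
def a (m n : ℕ) (x : ℝ) : ℕ := ⌊1 / ((T m)^[n - 1] x * th m)⌋₊

/-- Ω: the irrationals in (0,θ). -/
def Omega (m : ℕ) : Set ℝ := {x | x ∈ Set.Ioo 0 (th m) ∧ Irrational x}

/-- Convergent numerators, shifted: `p m x (n+1)` is p_n(x), `p m x 0` is p_{-1} = 1. -/
def p (m : ℕ) (x : ℝ) : ℕ → ℝ
  | 0 => 1
  | 1 => 0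
  | n + 2 => (a m (n + 1) x) * th m * p m x (n + 1) + p m x n

/-- Convergent denominators, shifted: `q m x (n+1)` is q_n(x), `q m x 0` is q_{-1} = 0. -/
def q (m : ℕ) (x : ℝ) : ℕ → ℝ
  | 0 => 0
  | 1 => 1
  | n + 2 => (a m (n + 1) x) * th m * q m x (n + 1) + q m x n

/-- Normalized Lebesgue measure on [0,θ]: λ_θ(A) = Leb(A)/θ (as a real number). -/
def lam (m : ℕ) (A : Set ℝ) : ℝ := (volume A).toReal / th m

open Function

lemma hasSum_sub_succ_of_antitone {f : ℕ → ℝ} {l : ℝ} (hf : Antitone f)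
    (hl : Tendsto f atTop (nhds l)) : HasSum (fun n => f n - f (n + 1)) (f 0 - l) := by
  rw [hasSum_iff_tendsto_nat_of_nonneg fun n => sub_nonneg.2 (hf n.le_succ)]
  simp_rw [Finset.sum_range_sub']
  exact tendsto_const_nhds.sub hl

lemma two_mul_log_add_one_sub_log_sub_log_add_two_mem_Ioo {k : ℝ} (hk : 0 < k) :
    2 * Real.log (k + 1) - Real.log k - Real.log (k + 2) ∈
      Ioo (1 / (k + 1) ^ 2) (1 / (k * (k + 2))) := by
  set y := (k + 1) ^ 2 / (k * (k + 2))
  have hy : 2 * Real.log (k + 1) - Real.log k - Real.log (k + 2) = Real.log y := by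
    rw [Real.log_div (by positivity) (by positivity), Real.log_mul hk.ne' (by positivity),
      Real.log_pow]
    push_cast
    ring
  have hy0 : 0 < y := by positivity
  have hy1 : y ≠ 1 := by
    intro h
    rw [div_eq_one_iff_eq (by positivity)] at h
    nlinarith
  have hinv1 : y⁻¹ ≠ 1 := by simpa using hy1
  rw [hy]
  constructor
  · have := Real.log_lt_sub_one_of_pos (inv_pos.2 hy0) hinv1
    rw [Real.log_inv] at this
    have e : y⁻¹ = 1 - 1 / (k + 1) ^ 2 := by simp only [y]; field_simp; ring
    linarith
  · have := Real.log_lt_sub_one_of_pos hy0 hy1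
    have e : y - 1 = 1 / (k * (k + 2)) := by simp only [y]; field_simp; ring
    linarith

variable {m : ℕ}

lemma th_nonneg (m : ℕ) : 0 ≤ th m := by
  unfold th
  positivity

lemma th_pos (hm : 0 < m) : 0 < th m := by
  unfold th
  positivity

lemma th_sq (m : ℕ) : th m ^ 2 = 1 / m := by
  rw [th, div_pow, Real.sq_sqrt m.cast_nonneg, one_pow]

lemma inv_th (m : ℕ) : (th m)⁻¹ = m * th m := by
  rw [th, one_div, inv_inv, ← div_eq_mul_inv, Real.div_sqrt]

lemma a_succ (n : ℕ) (x : ℝ) : a m (n + 1) x = a m 1 ((T m)^[n] x) := by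
  simp [a]

lemma T_of_ne_zero {y : ℝ} (hy : y ≠ 0) : T m y = 1 / y - th m * a m 1 y := by
  simp [T, a, hy]

lemma a_one_eq_iff (hm : 0 < m) {y : ℝ} (hy : 0 < y) {i : ℕ} :
    a m 1 y = i ↔ i * th m ≤ 1 / y ∧ 1 / y < (i + 1) * th m := by
  have hθ := th_pos hm
  simp only [a, iterate_zero_apply, Nat.sub_self, ← div_div]
  rw [Nat.floor_eq_iff (by positivity), le_div_iff₀ hθ, div_lt_iff₀ hθ]

lemma le_a_one (hm : 0 < m) {y : ℝ} (hy : y ∈ Ioc 0 (th m)) : m ≤ a m 1 y := by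
  have hθ := th_pos hm
  have hm' : (0 : ℝ) < m := by exact_mod_cast hm
  have hmθ : (m : ℝ) * th m ^ 2 = 1 := by rw [th_sq, mul_one_div_cancel hm'.ne']
  simp only [a, iterate_zero_apply, Nat.sub_self]
  refine Nat.le_floor ((le_div_iff₀ (by nlinarith [hy.1])).2 ?_)
  nlinarith [hy.2]

lemma T_mem_Ico (hm : 0 < m) {y : ℝ} (hy : 0 < y) : T m y ∈ Ico 0 (th m) := by
  obtain ⟨hl, hu⟩ := (a_one_eq_iff hm hy).1 rfl
  rw [T_of_ne_zero hy.ne']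
  constructor <;> linarith

lemma mapsTo_T (hm : 0 < m) : MapsTo (T m) (Icc 0 (th m)) (Icc 0 (th m)) := by
  rintro y ⟨hy0, -⟩
  rcases hy0.eq_or_lt with rfl | hy
  · simpa [T] using (th_pos hm).le
  · exact Ico_subset_Icc_self (T_mem_Ico hm hy)

lemma measurable_T : Measurable (T m) := by
  refine Measurable.ite (measurableSet_singleton 0) measurable_const ?_
  refine measurable_const.div measurable_id |>.sub (Measurable.const_mul ?_ _)
  exact measurable_from_nat.comp <| Nat.measurable_floor.comp <|
    measurable_const.div (measurable_id.mul_const _)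

lemma countable_preimage_iterate_T (n : ℕ) (y : ℝ) : ((T m)^[n] ⁻¹' {y}).Countable := by
  induction n generalizing y with
  | zero => simp
  | succ n ih =>
    have hT : T m ⁻¹' {y} ⊆ insert 0 (range fun i : ℕ => 1 / (y + th m * i)) := by
      intro z hz
      by_cases hz0 : z = 0
      · exact Or.inl hz0
      · refine Or.inr ⟨a m 1 z, ?_⟩
        rw [mem_preimage, mem_singleton_iff, T_of_ne_zero hz0] at hz
        simp [← hz]
    rw [iterate_succ', preimage_comp]
    refine ((((countable_range _).insert 0).mono hT).biUnion fun c _ => ih c).mono ?_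
    exact fun x hx => mem_biUnion hx rfl

/-- The inverse of `T m` on the cylinder `{y | a m 1 y = i}`. -/
def invBranch (m i : ℕ) (s : ℝ) : ℝ := 1 / (i * th m + s)

lemma invBranch_nonneg {i : ℕ} {t : ℝ} (ht : 0 ≤ t) : 0 ≤ invBranch m i t := by
  have := th_nonneg m
  unfold invBranch
  positivity

lemma invBranch_le_invBranch (hm : 0 < m) {i : ℕ} (hi : m ≤ i) {s t : ℝ} (hs : 0 ≤ s)
    (hst : s ≤ t) : invBranch m i t ≤ invBranch m i s := by
  have := th_pos hm
  have : (0 : ℝ) < i := by exact_mod_cast hm.trans_le hi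
  exact one_div_le_one_div_of_le (by positivity) (by linarith)

lemma invBranch_le_th (hm : 0 < m) {i : ℕ} (hi : m ≤ i) {s : ℝ} (hs : 0 ≤ s) :
    invBranch m i s ≤ th m := by
  have hθ := th_pos hm
  have hmθ : (m : ℝ) * th m = 1 / th m := by rw [one_div, inv_th]
  have hi' : (m : ℝ) ≤ i := by exact_mod_cast hi
  calc invBranch m i s ≤ 1 / (m * th m) := by
        refine one_div_le_one_div_of_le (by rw [hmθ]; positivity) ?_
        nlinarith
    _ = th m := by rw [hmθ, one_div_one_div]

lemma mem_Ioo_invBranch_iff {i : ℕ} {y s t : ℝ} (hy : 0 < y) (hs : 0 < i * th m + s)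
    (hst : s ≤ t) :
    y ∈ Ioo (invBranch m i t) (invBranch m i s) ↔ 1 / y ∈ Ioo (i * th m + s) (i * th m + t) := by
  rw [invBranch, invBranch, mem_Ioo, mem_Ioo, one_div_lt (by linarith) hy, lt_one_div hy hs,
    and_comm]

lemma T_mem_Ioo_iff (hm : 0 < m) {y s t : ℝ} (hy : y ∈ Icc 0 (th m)) (hs : 0 ≤ s) (hst : s ≤ t)
    (ht : t ≤ th m) :
    T m y ∈ Ioo s t ↔ ∃ j : ℕ, y ∈ Ioo (invBranch m (m + j) t) (invBranch m (m + j) s) := by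
  have hθ := th_pos hm
  have hpos : ∀ j : ℕ, 0 < ((m + j : ℕ) : ℝ) * th m + s := fun j => by
    have : (0 : ℝ) < (m + j : ℕ) := by exact_mod_cast Nat.add_pos_left hm j
    positivity
  rcases hy.1.eq_or_lt with rfl | hy0
  · simp only [T, if_true, mem_Ioo, invBranch, not_lt_of_ge hs, false_and, false_iff, not_exists]
    exact fun j h => (one_div_pos.2 (by linarith [hpos j])).not_gt h.1
  rw [T_of_ne_zero hy0.ne']
  constructor
  · rintro ⟨h1, h2⟩
    obtain ⟨j, hj⟩ := Nat.exists_eq_add_of_le (le_a_one hm ⟨hy0, hy.2⟩)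
    refine ⟨j, (mem_Ioo_invBranch_iff hy0 (hpos j) hst).2 ?_⟩
    rw [← hj]
    constructor <;> linarith
  · rintro ⟨j, hj⟩
    rw [mem_Ioo_invBranch_iff hy0 (hpos j) hst] at hj
    have ha : a m 1 y = m + j := by
      refine (a_one_eq_iff hm hy0).2 ⟨by linarith [hj.1], ?_⟩
      push_cast at hj ⊢
      linarith [hj.2]
    rw [ha]
    constructor <;> linarith [hj.1, hj.2]

lemma a_one_eq_iff_mem_Ioc (hm : 0 < m) {k : ℕ} (hk : 0 < k) {y : ℝ} :
    a m 1 y = k ↔ y ∈ Ioc (invBranch m k (th m)) (invBranch m k 0) := by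
  have hθ := th_pos hm
  have hk' : (0 : ℝ) < k := by exact_mod_cast hk
  rcases le_or_gt y 0 with hy | hy
  · have ha : a m 1 y = 0 := Nat.floor_of_nonpos <| by
      simpa using one_div_nonpos.2 (mul_nonpos_of_nonpos_of_nonneg hy hθ.le)
    have hα : 0 < invBranch m k (th m) := one_div_pos.2 (by positivity)
    rw [ha]
    exact ⟨fun h => absurd h hk.ne, fun h => absurd (hα.trans h.1) hy.not_gt⟩
  rw [a_one_eq_iff hm hy, mem_Ioc, invBranch, invBranch, add_zero, one_div_lt (by positivity) hy,
    le_one_div hy (by positivity), add_one_mul, and_comm]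

def iterPreimage (m n : ℕ) (s t : ℝ) : Set ℝ := Ioo 0 (th m) ∩ (T m)^[n] ⁻¹' Ioo s t

lemma measurableSet_iterPreimage (n : ℕ) (s t : ℝ) : MeasurableSet (iterPreimage m n s t) :=
  measurableSet_Ioo.inter (measurable_T.iterate n measurableSet_Ioo)

lemma iterPreimage_zero {s t : ℝ} (hs : 0 ≤ s) (ht : t ≤ th m) :
    iterPreimage m 0 s t = Ioo s t :=
  inter_eq_right.2 (Ioo_subset_Ioo hs ht)

lemma iterPreimage_succ (hm : 0 < m) {s t : ℝ} (hs : 0 ≤ s) (hst : s ≤ t) (ht : t ≤ th m)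
    (n : ℕ) :
    iterPreimage m (n + 1) s t =
      ⋃ j : ℕ, iterPreimage m n (invBranch m (m + j) t) (invBranch m (m + j) s) := by
  ext x
  simp only [iterPreimage, mem_iUnion, mem_inter_iff, mem_preimage, iterate_succ_apply',
    exists_and_left]
  refine and_congr_right fun hx => T_mem_Ioo_iff hm ?_ hs hst ht
  exact (mapsTo_T hm).iterate n (Ioo_subset_Icc_self hx)

lemma pairwise_disjoint_invBranch_Ioo (hm : 0 < m) {s t : ℝ} (hs : 0 ≤ s) (hst : s ≤ t)
    (ht : t ≤ th m) :
    Pairwise (Disjoint on fun j : ℕ => Ioo (invBranch m (m + j) t) (invBranch m (m + j) s)) := by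
  have hθ := th_pos hm
  have hm' : (0 : ℝ) < m := by exact_mod_cast hm
  have ht0 : 0 ≤ t := hs.trans hst
  refine (pairwise_disjoint_on _).2 fun j j' hjj' => disjoint_left.2 fun x hx hx' => ?_
  have hj : ((j : ℝ) + 1) * th m ≤ j' * th m := by gcongr; exact_mod_cast hjj'
  have hle : invBranch m (m + j') s ≤ invBranch m (m + j) t := by
    push_cast [invBranch]
    exact one_div_le_one_div_of_le (by positivity) (by nlinarith)
  exact lt_asymm hx.1 (hx'.2.trans_le hle)

lemma pairwise_disjoint_iterPreimage (hm : 0 < m) {s t : ℝ} (hs : 0 ≤ s) (hst : s ≤ t)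
    (ht : t ≤ th m) (n : ℕ) :
    Pairwise (Disjoint on
      fun j : ℕ => iterPreimage m n (invBranch m (m + j) t) (invBranch m (m + j) s)) :=
  fun _ _ hjj' => ((pairwise_disjoint_invBranch_Ioo hm hs hst ht hjj').preimage _).mono
    inter_subset_right inter_subset_right

/-- `gaussMeasure m / log (1 + θ²)` is the absolutely continuous invariant probability measure of
`T m`. -/
def gaussMeasure (m : ℕ) : Measure ℝ :=
  volume.withDensity fun x => ENNReal.ofReal (1 / (x + (th m)⁻¹))

lemma gaussMeasure_Ioo (hm : 0 < m) {s t : ℝ} (hs : 0 ≤ s) (hst : s ≤ t) :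
    gaussMeasure m (Ioo s t) =
      ENNReal.ofReal (Real.log (t + (th m)⁻¹) - Real.log (s + (th m)⁻¹)) := by
  have hc : 0 < (th m)⁻¹ := inv_pos.2 (th_pos hm)
  have hcont : ContinuousOn (fun x => 1 / (x + (th m)⁻¹)) (Icc s t) :=
    continuousOn_const.div (continuousOn_id.add continuousOn_const) fun x hx => by
      linarith [hx.1]
  rw [gaussMeasure, withDensity_apply _ measurableSet_Ioo,
    ← ofReal_integral_eq_lintegral_ofReal (hcont.integrableOn_Icc.mono_set Ioo_subset_Icc_self)
      (ae_restrict_of_forall_mem measurableSet_Ioo fun x hx =>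
        one_div_nonneg.2 (by linarith [hx.1])),
    ← integral_Ioc_eq_integral_Ioo, ← intervalIntegral.integral_of_le hst,
    intervalIntegral.integral_comp_add_right (fun x => 1 / x),
    integral_one_div_of_pos (by positivity) (by linarith), Real.log_div (by linarith) (by linarith)]

lemma log_invBranch_add_inv_th (hm : 0 < m) {i : ℕ} (hi : 0 < i) {r : ℝ} (hr : 0 ≤ r) :
    Real.log (invBranch m i r + (th m)⁻¹) =
      Real.log (th m)⁻¹ + (Real.log ((i + 1 : ℕ) * th m + r) - Real.log (i * th m + r)) := by
  have hθ := th_pos hm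
  have hi' : (0 : ℝ) < i := by exact_mod_cast hi
  have hr' : 0 < i * th m + r := by positivity
  have h : invBranch m i r + (th m)⁻¹ = (th m)⁻¹ * (((i + 1 : ℕ) * th m + r) / (i * th m + r)) := by
    rw [invBranch]
    field_simp [hθ.ne']
    push_cast
    ring
  rw [h, Real.log_mul (by positivity) (by positivity), Real.log_div (by positivity) hr'.ne']

lemma tsum_gaussMeasure_invBranch (hm : 0 < m) {s t : ℝ} (hs : 0 ≤ s) (hst : s ≤ t) :
    ∑' j : ℕ, gaussMeasure m (Ioo (invBranch m (m + j) t) (invBranch m (m + j) s)) =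
      gaussMeasure m (Ioo s t) := by
  have hθ := th_pos hm
  set g : ℕ → ℝ := fun j => Real.log (invBranch m (m + j) s + (th m)⁻¹) -
    Real.log (invBranch m (m + j) t + (th m)⁻¹)
  set f : ℕ → ℝ := fun j => Real.log ((m + j) * th m + t) - Real.log ((m + j) * th m + s)
  have hgf : ∀ j, g j = f j - f (j + 1) := fun j => by
    have hj := Nat.add_pos_left hm j
    simp only [g, f, log_invBranch_add_inv_th hm hj hs,
      log_invBranch_add_inv_th hm hj (hs.trans hst)]
    push_cast
    simp only [← add_assoc]
    ring
  have hg_nonneg : ∀ j, 0 ≤ g j := fun j => sub_nonneg.2 <| Real.log_le_log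
    (by linarith [invBranch_nonneg (m := m) (i := m + j) (hs.trans hst), inv_pos.2 hθ])
    (by linarith [invBranch_le_invBranch hm (m.le_add_right j) hs hst])
  have hf0 : f 0 = Real.log (t + (th m)⁻¹) - Real.log (s + (th m)⁻¹) := by
    simp only [f, inv_th]
    ring_nf
  have hf_lim : Tendsto f atTop (nhds 0) := by
    have hx : Tendsto (fun j : ℕ => ((m : ℝ) + j) * th m) atTop atTop :=
      (tendsto_atTop_add_const_left _ _ tendsto_natCast_atTop_atTop).atTop_mul_const hθ
    simpa [f, comp_def] using
      ((Real.tendsto_log_comp_add_sub_log t).sub (Real.tendsto_log_comp_add_sub_log s)).comp hx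
  have hsum : HasSum g (f 0) := by
    simpa [← hgf] using hasSum_sub_succ_of_antitone
      (antitone_nat_of_succ_le fun j => by linarith [hgf j, hg_nonneg j]) hf_lim
  simp only [gaussMeasure_Ioo hm hs hst, gaussMeasure_Ioo hm (invBranch_nonneg (hs.trans hst))
    (invBranch_le_invBranch hm (m.le_add_right _) hs hst)]
  rw [← ENNReal.ofReal_tsum_of_nonneg hg_nonneg hsum.summable, hsum.tsum_eq, hf0]

lemma gaussMeasure_iterPreimage (hm : 0 < m) (n : ℕ) {s t : ℝ} (hs : 0 ≤ s) (hst : s ≤ t)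
    (ht : t ≤ th m) : gaussMeasure m (iterPreimage m n s t) = gaussMeasure m (Ioo s t) := by
  induction n generalizing s t with
  | zero => rw [iterPreimage_zero hs ht]
  | succ n ih =>
    rw [iterPreimage_succ hm hs hst ht,
      measure_iUnion (pairwise_disjoint_iterPreimage hm hs hst ht n)
        fun _ => measurableSet_iterPreimage _ _ _,
      ← tsum_gaussMeasure_invBranch hm hs hst]
    exact tsum_congr fun j => ih (invBranch_nonneg (hs.trans hst))
      (invBranch_le_invBranch hm (m.le_add_right j) hs hst)
      (invBranch_le_th hm (m.le_add_right j) hs)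

lemma gaussMeasure_le_ofReal_th_mul_volume (hm : 0 < m) {A : Set ℝ} (hA : MeasurableSet A)
    (hA0 : A ⊆ Ici 0) :
    gaussMeasure m A ≤ ENNReal.ofReal (th m) * volume A := by
  have hc := inv_pos.2 (th_pos hm)
  rw [gaussMeasure, withDensity_apply _ hA, ← setLIntegral_const]
  refine setLIntegral_mono' hA fun x hx => ENNReal.ofReal_le_ofReal ?_
  calc 1 / (x + (th m)⁻¹) ≤ 1 / (th m)⁻¹ :=
        one_div_le_one_div_of_le hc (by linarith [mem_Ici.1 (hA0 hx)])
    _ = th m := by rw [one_div, inv_inv]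

lemma ofReal_mul_volume_le_gaussMeasure (hm : 0 < m) {A : Set ℝ} (hA : MeasurableSet A)
    (hAθ : A ⊆ Icc 0 (th m)) :
    ENNReal.ofReal (1 / (th m + (th m)⁻¹)) * volume A ≤ gaussMeasure m A := by
  have hc := inv_pos.2 (th_pos hm)
  rw [gaussMeasure, withDensity_apply _ hA, ← setLIntegral_const]
  refine setLIntegral_mono' hA fun x hx => ENNReal.ofReal_le_ofReal ?_
  exact one_div_le_one_div_of_le (by linarith [(hAθ hx).1]) (by linarith [(hAθ hx).2])

lemma lam_mem_Icc_gaussMeasure (hm : 0 < m) {A : Set ℝ} (hA : MeasurableSet A)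
    (hAθ : A ⊆ Icc 0 (th m)) :
    lam m A ∈ Icc (m * (gaussMeasure m A).toReal) ((m + 1) * (gaussMeasure m A).toReal) := by
  have hθ := th_pos hm
  have hm' : (0 : ℝ) < m := by exact_mod_cast hm
  have hmθ : (m : ℝ) * th m ^ 2 = 1 := by rw [th_sq, mul_one_div_cancel hm'.ne']
  have hV : volume A ≠ ⊤ := ((measure_mono hAθ).trans_lt (by simp)).ne
  have hle := gaussMeasure_le_ofReal_th_mul_volume hm hA (hAθ.trans Icc_subset_Ici_self)
  have hVθ : ENNReal.ofReal (th m) * volume A ≠ ⊤ := ENNReal.mul_ne_top ENNReal.ofReal_ne_top hV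
  have hμ : gaussMeasure m A ≠ ⊤ := ne_top_of_le_ne_top hVθ hle
  have hup := ENNReal.toReal_mono hVθ hle
  have hlow := ENNReal.toReal_mono hμ (ofReal_mul_volume_le_gaussMeasure hm hA hAθ)
  rw [ENNReal.toReal_mul, ENNReal.toReal_ofReal hθ.le] at hup
  rw [ENNReal.toReal_mul, ENNReal.toReal_ofReal (by positivity), inv_th] at hlow
  set V := (volume A).toReal
  set M := (gaussMeasure m A).toReal
  have hlam : lam m A = V * (m * th m) := by rw [lam, div_eq_mul_inv, inv_th]
  rw [hlam]
  constructor
  · nlinarith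
  · calc V * (m * th m) = (m + 1) * (1 / (th m + m * th m) * V) := by
          field_simp
          linear_combination (m + 1) * V * hmθ
      _ ≤ (m + 1) * M := by gcongr

lemma volume_setOf_a_succ_eq (hm : 0 < m) {k : ℕ} (hk : 0 < k) (n : ℕ) :
    volume {x | x ∈ Omega m ∧ a m (n + 1) x = k} =
      volume (iterPreimage m n (invBranch m k (th m)) (invBranch m k 0)) := by
  refine measure_congr (eventuallyEq_set.2 ?_)
  filter_upwards [(countable_range ((↑) : ℚ → ℝ)).ae_notMem volume,
    (countable_preimage_iterate_T n (invBranch m k 0)).ae_notMem volume] with x hirr hβ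
  have hIoc : (T m)^[n] x ∈ Ioc (invBranch m k (th m)) (invBranch m k 0) ↔
      (T m)^[n] x ∈ Ioo (invBranch m k (th m)) (invBranch m k 0) :=
    ⟨fun h => ⟨h.1, h.2.lt_of_ne hβ⟩, fun h => Ioo_subset_Ioc_self h⟩
  change (x ∈ Ioo 0 (th m) ∧ Irrational x) ∧ a m (n + 1) x = k ↔
    x ∈ Ioo 0 (th m) ∧ (T m)^[n] x ∈ Ioo _ _
  rw [a_succ, a_one_eq_iff_mem_Ioc hm hk, hIoc]
  exact ⟨fun h => ⟨h.1.1, h.2⟩, fun h => ⟨⟨h.1, hirr⟩, h.2⟩⟩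

lemma gaussMeasure_digit_cylinder (hm : 0 < m) {k : ℕ} (hk : m ≤ k) :
    gaussMeasure m (Ioo (invBranch m k (th m)) (invBranch m k 0)) =
      ENNReal.ofReal (2 * Real.log (k + 1) - Real.log k - Real.log (k + 2)) := by
  have hθ := th_pos hm
  have hk0 : 0 < k := hm.trans_le hk
  have hk' : (0 : ℝ) < k := by exact_mod_cast hk0
  rw [gaussMeasure_Ioo hm (invBranch_nonneg hθ.le) (invBranch_le_invBranch hm hk le_rfl hθ.le),
    log_invBranch_add_inv_th hm hk0 le_rfl, log_invBranch_add_inv_th hm hk0 hθ.le]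
  have e1 : ((k + 1 : ℕ) : ℝ) * th m + th m = (k + 2) * th m := by push_cast; ring
  have e2 : (k : ℝ) * th m + th m = (k + 1) * th m := by ring
  rw [add_zero, add_zero, e1, e2, Nat.cast_succ, Real.log_mul (by positivity) hθ.ne',
    Real.log_mul (by positivity) hθ.ne', Real.log_mul (by positivity) hθ.ne']
  ring_nf

lemma lam_setOf_a_succ_mem_Icc (hm : 0 < m) {k : ℕ} (hk : m ≤ k) (n : ℕ) :
    lam m {x | x ∈ Omega m ∧ a m (n + 1) x = k} ∈
      Icc (m * (2 * Real.log (k + 1) - Real.log k - Real.log (k + 2)))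
        ((m + 1) * (2 * Real.log (k + 1) - Real.log k - Real.log (k + 2))) := by
  have hθ := th_pos hm
  have hk0 : (0 : ℝ) < k := by exact_mod_cast hm.trans_le hk
  have hG := (two_mul_log_add_one_sub_log_sub_log_add_two_mem_Ioo hk0).1
  have h := lam_mem_Icc_gaussMeasure hm
    (measurableSet_iterPreimage n (invBranch m k (th m)) (invBranch m k 0))
    (inter_subset_left.trans Ioo_subset_Icc_self)
  rwa [gaussMeasure_iterPreimage hm n (invBranch_nonneg hθ.le)
      (invBranch_le_invBranch hm hk le_rfl hθ.le) (invBranch_le_th hm hk le_rfl),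
    gaussMeasure_digit_cylinder hm hk,
    ENNReal.toReal_ofReal ((one_div_pos.2 (by positivity)).trans hG).le, lam,
    ← volume_setOf_a_succ_eq hm (hm.trans_le hk) n, ← lam] at h

/-- 1/(6k²) < λ_θ({x ∈ Ω : a_{n+1}(x) = k}) < (m+1)/k². -/
theorem stmt_7 (m : ℕ) (hm : 2 ≤ m) (n : ℕ) (k : ℕ) (hk : m ≤ k) :
    1 / (6 * (k : ℝ) ^ 2) < lam m {x | x ∈ Omega m ∧ a m (n + 1) x = k} ∧
      lam m {x | x ∈ Omega m ∧ a m (n + 1) x = k} < ((m : ℝ) + 1) / (k : ℝ) ^ 2 := by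
  have hm2 : (2 : ℝ) ≤ m := by exact_mod_cast hm
  have hmk : (m : ℝ) ≤ k := by exact_mod_cast hk
  have hk0 : (0 : ℝ) < k := by linarith
  obtain ⟨hlow, hup⟩ := lam_setOf_a_succ_mem_Icc (by omega) hk n
  obtain ⟨hG_low, hG_up⟩ := two_mul_log_add_one_sub_log_sub_log_add_two_mem_Ioo hk0
  constructor
  · calc 1 / (6 * (k : ℝ) ^ 2) < m * (1 / (k + 1) ^ 2) := by
          rw [mul_one_div, div_lt_div_iff₀ (by positivity) (by positivity)]
          nlinarith
      _ < _ := mul_lt_mul_of_pos_left hG_low (by linarith)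
      _ ≤ _ := hlow
  · calc _ ≤ _ := hup
      _ < (m + 1) * (1 / (k * (k + 2))) := mul_lt_mul_of_pos_left hG_up (by linarith)
      _ ≤ (m + 1) / (k : ℝ) ^ 2 := by
          rw [mul_one_div]
          exact div_le_div_of_nonneg_left (by linarith) (by positivity) (by nlinarith)
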